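/- Let f be continuous, positive and nondecreasing on (0,∞), F(τ) = ∫₀^τ f, H(τ) = ((k+1)F(τ))^{1/(k+1)}, and assume Φ(s) = ∫_s^∞ dτ/H(τ) < ∞ for s > 0 and that C_f = lim_{s→∞} H'(s)·Φ(s) exists. Then C_f ≥ 1. -/

import Mathlib

open Set Filter MeasureTheory Topology

/-!
Write `Φ' = -1/H`, so that `(H Φ)' = H' Φ - 1`. If `C_f < 1`, this derivative is eventually
bounded by a negative constant, which drives `H Φ` to `-∞`; but `H Φ ≥ 0`.
-/

theorem intervalIntegrable_of_monotoneOn_Ioi {f : ℝ → ℝ} {a b : ℝ} (hab : a ≤ b)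
    (hmono : MonotoneOn f (Ioi a)) (hnonneg : ∀ x ∈ Ioi a, 0 ≤ f x) :
    IntervalIntegrable f volume a b := by
  -- `f a` is arbitrary, but replacing it by `0` makes `f` monotone on `[a, b]`.
  have hind : MonotoneOn ((Ioi a).indicator f) (uIcc a b) := by
    intro x hx y hy hxy
    rw [uIcc_of_le hab] at hx
    rcases hx.1.eq_or_lt with rfl | hax
    · rw [indicator_of_notMem self_notMem_Ioi]
      exact indicator_nonneg hnonneg y
    · have hay : y ∈ Ioi a := hax.trans_le hxy
      rw [indicator_of_mem (mem_Ioi.2 hax), indicator_of_mem hay]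
      exact hmono hax hay hxy
  have hint := hind.intervalIntegrable (μ := volume)
  rw [intervalIntegrable_iff_integrableOn_Ioc_of_le hab] at hint ⊢
  exact hint.congr_fun (fun x hx => indicator_of_mem hx.1 f) measurableSet_Ioc

theorem nonneg_of_tendsto_deriv_of_eventually_nonneg {u u' : ℝ → ℝ} {L : ℝ}
    (hderiv : ∀ᶠ x in atTop, HasDerivAt u (u' x) x) (hnonneg : ∀ᶠ x in atTop, 0 ≤ u x)
    (hlim : Tendsto u' atTop (𝓝 L)) : 0 ≤ L := by
  by_contra! hL
  obtain ⟨s₀, hs₀⟩ := eventually_atTop.1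
    (hderiv.and (hlim.eventually (eventually_le_nhds (by linarith : L < L / 2))))
  have hbound : ∀ x, s₀ ≤ x → u x ≤ u s₀ + L / 2 * (x - s₀) := by
    intro x hx
    have := (convex_Ici s₀).image_sub_le_mul_sub_of_deriv_le
      (fun y hy => (hs₀ y hy).1.continuousAt.continuousWithinAt)
      (fun y hy => (hs₀ y (interior_subset hy)).1.differentiableAt.differentiableWithinAt)
      (fun y hy => (hs₀ y (interior_subset hy)).1.deriv ▸ (hs₀ y (interior_subset hy)).2)
      s₀ self_mem_Ici x hx hx
    linarith
  have hbot : Tendsto u atTop atBot := by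
    refine tendsto_atBot_mono' atTop (eventually_atTop.2 ⟨s₀, hbound⟩) ?_
    refine tendsto_atBot_add_const_left _ _ ?_
    simpa only [mul_comm, id, ← sub_eq_add_neg] using
      (tendsto_atTop_add_const_right _ (-s₀) tendsto_id).atTop_mul_const_of_neg
        (by linarith : L / 2 < 0)
  obtain ⟨x, hx_nonneg, hx_neg⟩ := (hnonneg.and (hbot.eventually (eventually_lt_atBot 0))).exists
  linarith

theorem hasDerivAt_integral_Ioi {g : ℝ → ℝ} {a s : ℝ} (hg : IntegrableOn g (Ioi a))
    (has : a < s) (hcont : ContinuousAt g s) :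
    HasDerivAt (fun x => ∫ τ in Ioi x, g τ) (-g s) s := by
  have htail : (fun x => ∫ τ in Ioi x, g τ) =ᶠ[𝓝 s]
      fun x => (∫ τ in Ioi a, g τ) - ∫ τ in a..x, g τ := by
    filter_upwards [Ioi_mem_nhds has] with x hx
    rw [← intervalIntegral.integral_Ioi_sub_Ioi hg hx.le, sub_sub_cancel]
  refine HasDerivAt.congr_of_eventuallyEq ?_ htail
  refine (intervalIntegral.integral_hasDerivAt_right ?_ ?_ hcont).const_sub _
  · exact (intervalIntegrable_iff_integrableOn_Ioc_of_le has.le).2 (hg.mono_set Ioc_subset_Ioi_self)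
  · exact AEStronglyMeasurable.stronglyMeasurableAtFilter_of_mem hg.aestronglyMeasurable (Ioi_mem_nhds has)

theorem stmt5_general (k : ℕ) (f F H Φ : ℝ → ℝ) (Cf : ℝ)
    (hf : ContDiffOn ℝ 1 f (Ioi 0))
    (hfpos : ∀ s, 0 < s → 0 < f s)
    (hfmono : MonotoneOn f (Ioi 0))
    (hF : ∀ τ, F τ = ∫ s in (0:ℝ)..τ, f s)
    (hH : ∀ τ, H τ = (((k:ℝ) + 1) * F τ) ^ ((1:ℝ)/((k:ℝ)+1)))
    (hΦint : ∀ s, 0 < s → IntegrableOn (fun τ => 1 / H τ) (Ioi s))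
    (hΦ : ∀ s, 0 < s → Φ s = ∫ τ in Ioi s, 1 / H τ)
    (hCf : Tendsto (fun s => deriv H s * Φ s) atTop (nhds Cf)) :
    1 ≤ Cf := by
  have hfint : ∀ τ, 0 < τ → IntervalIntegrable f volume 0 τ := fun τ hτ =>
    intervalIntegrable_of_monotoneOn_Ioi hτ.le hfmono fun s hs => (hfpos s hs).le
  have hFpos : ∀ s, 0 < s → 0 < F s := fun s hs =>
    hF s ▸ intervalIntegral.intervalIntegral_pos_of_pos_on (hfint s hs)
      (fun x hx => hfpos x hx.1) hs
  have hHpos : ∀ s, 0 < s → 0 < H s := fun s hs => by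
    have := hFpos s hs
    rw [hH s]
    positivity
  have hHdiff : ∀ s, 0 < s → DifferentiableAt ℝ H s := fun s hs => by
    have hFderiv : HasDerivAt F (f s) s := funext hF ▸
      intervalIntegral.integral_hasDerivAt_right (hfint s hs)
        (hf.continuousOn.stronglyMeasurableAtFilter isOpen_Ioi s hs)
        (hf.continuousOn.continuousAt (Ioi_mem_nhds hs))
    have := hFpos s hs
    rw [funext hH]
    exact (hFderiv.differentiableAt.const_mul _).rpow_const (Or.inl (by positivity))
  have hΦderiv : ∀ s, 0 < s → HasDerivAt Φ (-(1 / H s)) s := fun s hs => by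
    have hΦeq : Φ =ᶠ[𝓝 s] fun x => ∫ τ in Ioi x, 1 / H τ := by
      filter_upwards [Ioi_mem_nhds hs] with x hx using hΦ x hx
    refine HasDerivAt.congr_of_eventuallyEq ?_ hΦeq
    exact hasDerivAt_integral_Ioi (hΦint (s / 2) (half_pos hs)) (half_lt_self hs)
      (continuousAt_const.div (hHdiff s hs).continuousAt (hHpos s hs).ne')
  have hΦnonneg : ∀ s, 0 < s → 0 ≤ Φ s := fun s hs => by
    rw [hΦ s hs]
    exact setIntegral_nonneg measurableSet_Ioi fun x hx => (one_div_pos.2 (hHpos x (hs.trans hx))).le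
  have hHΦderiv : ∀ᶠ s in atTop, HasDerivAt (fun x => H x * Φ x) (deriv H s * Φ s - 1) s := by
    filter_upwards [eventually_gt_atTop 0] with s hs
    refine ((hHdiff s hs).hasDerivAt.mul (hΦderiv s hs)).congr_deriv ?_
    rw [mul_neg, mul_one_div_cancel (hHpos s hs).ne', sub_eq_add_neg]
  have := nonneg_of_tendsto_deriv_of_eventually_nonneg hHΦderiv
    ((eventually_gt_atTop 0).mono fun s hs => mul_nonneg (hHpos s hs).le (hΦnonneg s hs))
    (hCf.sub_const 1)
  linarith

theorem stmt5 (k : ℕ) (hk : 1 ≤ k) (f F H Φ : ℝ → ℝ) (Cf : ℝ)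
    (hf : ContDiffOn ℝ 1 f (Ioi 0))
    (hfpos : ∀ s, 0 < s → 0 < f s)
    (hfmono : MonotoneOn f (Ioi 0))
    (hF : ∀ τ, F τ = ∫ s in (0:ℝ)..τ, f s)
    (hH : ∀ τ, H τ = (((k:ℝ) + 1) * F τ) ^ ((1:ℝ)/((k:ℝ)+1)))
    (hΦint : ∀ s, 0 < s → IntegrableOn (fun τ => 1 / H τ) (Ioi s))
    (hΦ : ∀ s, 0 < s → Φ s = ∫ τ in Ioi s, 1 / H τ)
    (hCf : Tendsto (fun s => deriv H s * Φ s) atTop (nhds Cf)) :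
    1 ≤ Cf :=
  stmt5_general k f F H Φ Cf hf hfpos hfmono hF hH hΦint hΦ hCf
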